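/- Let f : ℝᵈ → ℝ be C², μ-strongly-convex, L-smooth, with ODE gradients bounded by ℓ. Let ∇̃f be a stochastic/perturbed gradient oracle with ‖∇̃f(x) − ∇f(x)‖ ≤ R for all x, and let Ψ̃(x) = x − h∇̃f(x). If ε > R/μ and 0 < h ≤ min{2(με − R)/(ℓL), 1/L}, then the sampled gradient flow (yₖ) is ε-shadowed by the orbit of Ψ̃ starting at x₀ = y₀. -/

import Mathlib

/-!
Exact gradient descent `Ψ x = x - h • ∇f x` is a `(1 - hμ)`-contraction: its derivative
`id - h ∇²f` is symmetric with Rayleigh quotients in `[1 - hL, 1 - hμ] ⊆ [0, 1 - hμ]`.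
The sampled flow `y (k h)` is a pseudo-orbit of `Ψ` with one-step defect `ℓLh²/2` (the local
error of an explicit Euler step), and the perturbed map stays within `hR` of `Ψ`. Hence the
error `‖x k - y (k h)‖` stays below `ε` by induction, as `hR + ℓLh²/2 ≤ hμε` is exactly the
step-size condition.
-/

open Set InnerProductSpace
open scoped RealInnerProductSpace Gradient

theorem dist_le_of_contraction_of_pseudoOrbit {X : Type*} [PseudoMetricSpace X]
    {Ψ Ψ' : X → X} {q D δ ε : ℝ} (hq : 0 ≤ q)
    (hΨ : ∀ a b, dist (Ψ a) (Ψ b) ≤ q * dist a b) (hΨ' : ∀ a, dist (Ψ' a) (Ψ a) ≤ D)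
    (hbudget : D + δ ≤ (1 - q) * ε) {x y : ℕ → X}
    (hx : ∀ k, x (k + 1) = Ψ' (x k)) (hy : ∀ k, dist (Ψ (y k)) (y (k + 1)) ≤ δ)
    (h0 : dist (x 0) (y 0) ≤ ε) (k : ℕ) : dist (x k) (y k) ≤ ε := by
  induction k with
  | zero => exact h0
  | succ k ih =>
    calc dist (x (k + 1)) (y (k + 1))
        ≤ dist (Ψ' (x k)) (Ψ (x k)) + dist (Ψ (x k)) (Ψ (y k)) + dist (Ψ (y k)) (y (k + 1)) := by
          rw [hx]; exact dist_triangle4 _ _ _ _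
      _ ≤ D + q * ε + δ := by
          gcongr
          · exact hΨ' _
          · exact (hΨ _ _).trans (mul_le_mul_of_nonneg_left ih hq)
          · exact hy k
      _ ≤ ε := by linarith

theorem norm_eulerStep_sub_le {E : Type*} [NormedAddCommGroup E] [NormedSpace ℝ E]
    {F : E → E} {y : ℝ → E} {K ℓ t h : ℝ} (hK : 0 ≤ K)
    (hF : ∀ p q, ‖F p - F q‖ ≤ K * ‖p - q‖) (hh : 0 ≤ h)
    (hy : ∀ s ∈ Icc t (t + h), HasDerivAt y (F (y s)) s)
    (hℓ : ∀ s ∈ Icc t (t + h), ‖F (y s)‖ ≤ ℓ) :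
    ‖y t + h • F (y t) - y (t + h)‖ ≤ K * ℓ / 2 * h ^ 2 := by
  have hy' : ∀ s ∈ Ico t (t + h), HasDerivAt y (F (y s)) s :=
    fun s hs => hy s (Ico_subset_Icc_self hs)
  have hspeed : ∀ s ∈ Icc t (t + h), ‖y s - y t‖ ≤ ℓ * (s - t) :=
    norm_image_sub_le_of_norm_deriv_right_le_segment
      (fun s hs => (hy s hs).continuousAt.continuousWithinAt)
      (fun s hs => (hy' s hs).hasDerivWithinAt) (fun s hs => hℓ s (Ico_subset_Icc_self hs))
  set w : ℝ → E := fun s => y s - y t - (s - t) • F (y t)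
  have hw : ∀ s ∈ Icc t (t + h), HasDerivAt w (F (y s) - F (y t)) s := fun s hs => by
    simpa only [one_smul] using
      ((hy s hs).sub_const (y t)).fun_sub (((hasDerivAt_id' s).sub_const t).smul_const (F (y t)))
  -- the fencing function `Kℓ(s - t)²/2` majorises `w` because `‖w'(s)‖ ≤ Kℓ(s - t)`
  have hfence : ‖w (t + h)‖ ≤ K * ℓ / 2 * (t + h - t) ^ 2 :=
    image_norm_le_of_norm_deriv_right_le_deriv_boundary (f := w)
    (B := fun s => K * ℓ / 2 * (s - t) ^ 2) (B' := fun s => K * ℓ * (s - t))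
    (fun s hs => (hw s hs).continuousAt.continuousWithinAt)
    (fun s hs => (hw s (Ico_subset_Icc_self hs)).hasDerivWithinAt) (by simp [w])
    (fun s => ((((hasDerivAt_id' s).sub_const t).fun_pow 2).const_mul (K * ℓ / 2)).congr_deriv
      (by ring))
    (fun s hs => calc
      ‖F (y s) - F (y t)‖ ≤ K * ‖y s - y t‖ := hF _ _
      _ ≤ K * (ℓ * (s - t)) := by gcongr; exact hspeed s (Ico_subset_Icc_self hs)
      _ = K * ℓ * (s - t) := by ring)
    (right_mem_Icc.mpr (by linarith))
  have hw_end : y t + h • F (y t) - y (t + h) = -w (t + h) := by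
    simp only [w, add_sub_cancel_left]; abel
  rw [hw_end, norm_neg]
  simpa using hfence

section InnerProductSpace

variable {E : Type*} [NormedAddCommGroup E] [InnerProductSpace ℝ E]

theorem ContinuousLinearMap.opNorm_le_of_abs_inner_self_le {T : E →L[ℝ] E}
    (hT : (T : E →ₗ[ℝ] E).IsSymmetric) {c : ℝ} (hc : 0 ≤ c)
    (hTc : ∀ v, |⟪T v, v⟫| ≤ c * ‖v‖ ^ 2) : ‖T‖ ≤ c := by
  rw [T.norm_eq_iSup_rayleighQuotient hT]
  refine ciSup_le fun v => ?_
  rcases eq_or_ne v 0 with rfl | hv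
  · simpa using hc
  rw [rayleighQuotient, reApplyInnerSelf_apply, RCLike.re_to_real, abs_div, abs_sq,
    div_le_iff₀ (by positivity)]
  exact hTc v

theorem le_opNorm_of_mul_sq_le_inner [Nontrivial E] (A : E →L[ℝ] E) {μ : ℝ}
    (hμ : ∀ v, μ * ‖v‖ ^ 2 ≤ ⟪v, A v⟫) : μ ≤ ‖A‖ := by
  obtain ⟨v, hv⟩ := exists_ne (0 : E)
  refine le_of_mul_le_mul_right ?_ (by positivity : 0 < ‖v‖ ^ 2)
  calc μ * ‖v‖ ^ 2 ≤ ⟪v, A v⟫ := hμ v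
    _ ≤ ‖v‖ * ‖A v‖ := real_inner_le_norm _ _
    _ ≤ ‖v‖ * (‖A‖ * ‖v‖) := by gcongr; exact A.le_opNorm v
    _ = ‖A‖ * ‖v‖ ^ 2 := by ring

theorem norm_id_sub_smul_le {A : E →L[ℝ] E} (hA : (A : E →ₗ[ℝ] E).IsSymmetric) {μ L h : ℝ}
    (hμ : ∀ v, μ * ‖v‖ ^ 2 ≤ ⟪v, A v⟫) (hL : ‖A‖ ≤ L)
    (hh : 0 ≤ h) (hhL : h * L ≤ 1) (hhμ : h * μ ≤ 1) :
    ‖ContinuousLinearMap.id ℝ E - h • A‖ ≤ 1 - h * μ := by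
  refine ContinuousLinearMap.opNorm_le_of_abs_inner_self_le ?_ (by linarith) fun v => ?_
  · exact LinearMap.IsSymmetric.id.sub (hA.smul (conj_trivial h))
  have hinner : ⟪(ContinuousLinearMap.id ℝ E - h • A) v, v⟫ = ‖v‖ ^ 2 - h * ⟪v, A v⟫ := by
    rw [sub_apply, ContinuousLinearMap.id_apply, smul_apply, inner_sub_left,
      real_inner_smul_left, real_inner_self_eq_norm_sq, real_inner_comm v]
  have hupper : ⟪v, A v⟫ ≤ L * ‖v‖ ^ 2 :=
    calc ⟪v, A v⟫ ≤ ‖v‖ * ‖A v‖ := real_inner_le_norm _ _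
      _ ≤ ‖v‖ * (‖A‖ * ‖v‖) := by gcongr; exact A.le_opNorm v
      _ ≤ L * ‖v‖ ^ 2 := by nlinarith [norm_nonneg v]
  rw [hinner, abs_le]
  constructor <;> nlinarith [hμ v, sq_nonneg ‖v‖, mul_le_mul_of_nonneg_left hupper hh]

variable [CompleteSpace E]

theorem ContDiff.gradient {f : E → ℝ} {n : WithTop ℕ∞} (hf : ContDiff ℝ (n + 1) f) :
    ContDiff ℝ n (∇ f) :=
  (toDual ℝ E).symm.contDiff.comp (hf.fderiv_right le_rfl)

theorem inner_fderiv_gradient_apply (f : E → ℝ) (a u v : E) :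
    ⟪u, fderiv ℝ (∇ f) a v⟫ = fderiv ℝ (fderiv ℝ f) a v u := by
  change ⟪u, fderiv ℝ ((toDual ℝ E).symm ∘ fderiv ℝ f) a v⟫ = _
  rw [LinearIsometryEquiv.comp_fderiv, real_inner_comm]
  exact toDual_symm_apply

theorem isSymmetric_fderiv_gradient {f : E → ℝ} {a : E} (hf : ContDiffAt ℝ 2 f a) :
    (fderiv ℝ (∇ f) a : E →ₗ[ℝ] E).IsSymmetric := fun u v => by
  rw [ContinuousLinearMap.coe_coe, real_inner_comm, inner_fderiv_gradient_apply,
    inner_fderiv_gradient_apply]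
  exact hf.isSymmSndFDerivAt (by simp) u v

theorem norm_gradientStep_sub_le {f : E → ℝ} (hf : ContDiff ℝ 2 f) {μ L h : ℝ}
    (hμ : ∀ a v, μ * ‖v‖ ^ 2 ≤ ⟪v, fderiv ℝ (∇ f) a v⟫) (hL : ∀ a, ‖fderiv ℝ (∇ f) a‖ ≤ L)
    (hh : 0 ≤ h) (hhL : h * L ≤ 1) (hhμ : h * μ ≤ 1) (a b : E) :
    ‖(a - h • ∇ f a) - (b - h • ∇ f b)‖ ≤ (1 - h * μ) * ‖a - b‖ := by
  have hdiff : Differentiable ℝ (∇ f) := hf.gradient.differentiable one_ne_zero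
  have hderiv : ∀ z, HasFDerivWithinAt (fun z => z - h • ∇ f z)
      (ContinuousLinearMap.id ℝ E - h • fderiv ℝ (∇ f) z) univ z := fun z =>
    ((hasFDerivAt_id z).sub ((hdiff z).hasFDerivAt.const_smul h)).hasFDerivWithinAt
  exact convex_univ.norm_image_sub_le_of_norm_hasFDerivWithin_le (fun z _ => hderiv z)
    (fun z _ => norm_id_sub_smul_le (isSymmetric_fderiv_gradient hf.contDiffAt) (hμ z) (hL z)
      hh hhL hhμ) (mem_univ b) (mem_univ a)

end InnerProductSpace

/-- Shadowing with stochastic/perturbed gradients: if ‖∇̃f − ∇f‖ ≤ R, ε > R/μ and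
0 < h ≤ min{2(με − R)/(ℓL), 1/L}, the sampled gradient flow is ε-shadowed by the
perturbed gradient descent orbit started at y₀. -/
theorem perturbed_gradient_descent_shadowing {d : ℕ}
    (f : EuclideanSpace ℝ (Fin d) → ℝ)
    (g : EuclideanSpace ℝ (Fin d) → EuclideanSpace ℝ (Fin d))
    (L μ ℓ R ε h : ℝ)
    (hf : ContDiff ℝ 2 f)
    (hsc : ∀ a v, μ * ‖v‖ ^ 2 ≤ inner ℝ v (fderiv ℝ (gradient f) a v))
    (hL : ∀ a, ‖fderiv ℝ (gradient f) a‖ ≤ L)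
    (hμ : 0 < μ) (hLpos : 0 < L) (hℓpos : 0 < ℓ) (hR : 0 ≤ R)
    (hpert : ∀ x, ‖g x - gradient f x‖ ≤ R)
    (hε : R / μ < ε)
    (y : ℝ → EuclideanSpace ℝ (Fin d))
    (hflow : ∀ t : ℝ, HasDerivAt y (-gradient f (y t)) t)
    (hℓ : ∀ t : ℝ, 0 ≤ t → ‖gradient f (y t)‖ ≤ ℓ)
    (hh : 0 < h) (hhbound : h ≤ min (2 * (μ * ε - R) / (ℓ * L)) (1 / L))
    (x : ℕ → EuclideanSpace ℝ (Fin d))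
    (hx0 : x 0 = y 0)
    (hgd : ∀ k : ℕ, x (k + 1) = x k - h • g (x k)) :
    ∀ k : ℕ, ‖x k - y ((k : ℝ) * h)‖ ≤ ε := by
  have hε0 : 0 ≤ ε := (div_nonneg hR hμ.le).trans hε.le
  rcases subsingleton_or_nontrivial (EuclideanSpace ℝ (Fin d)) with hE | hE
  · intro k
    simpa [Subsingleton.elim (x k) (y (k * h))] using hε0
  have hhL : h * L ≤ 1 := (le_div_iff₀ hLpos).mp (hhbound.trans (min_le_right _ _))
  have hstep : h * (ℓ * L) ≤ 2 * (μ * ε - R) :=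
    (le_div_iff₀ (by positivity)).mp (hhbound.trans (min_le_left _ _))
  have hμL : μ ≤ L := (le_opNorm_of_mul_sq_le_inner _ (hsc 0)).trans (hL 0)
  have hhμ : h * μ ≤ 1 := (mul_le_mul_of_nonneg_left hμL hh.le).trans hhL
  have hdiff : Differentiable ℝ (∇ f) := (ContDiff.gradient (n := 1) hf).differentiable one_ne_zero
  have hlip : ∀ p q, ‖-∇ f p - -∇ f q‖ ≤ L * ‖p - q‖ := fun p q => by
    rw [neg_sub_neg, norm_sub_rev]
    exact convex_univ.norm_image_sub_le_of_norm_fderiv_le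
      (fun z _ => hdiff z) (fun z _ => hL z) (mem_univ q) (mem_univ p)
  have hcontract : ∀ a b, dist (a - h • ∇ f a) (b - h • ∇ f b) ≤ (1 - h * μ) * dist a b :=
    fun a b => by
      simpa only [dist_eq_norm] using norm_gradientStep_sub_le hf hsc hL hh.le hhL hhμ a b
  have hperturb : ∀ a, dist (a - h • g a) (a - h • ∇ f a) ≤ h * R := fun a => by
    rw [dist_eq_norm, sub_sub_sub_cancel_left, ← smul_sub, norm_smul, Real.norm_of_nonneg hh.le,
      norm_sub_rev]
    exact mul_le_mul_of_nonneg_left (hpert a) hh.le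
  have hpseudo : ∀ j : ℕ, dist (y (j * h) - h • ∇ f (y (j * h))) (y ((j + 1 : ℕ) * h))
      ≤ L * ℓ / 2 * h ^ 2 := fun j => by
    have hj : 0 ≤ (j : ℝ) * h := by positivity
    rw [dist_eq_norm, Nat.cast_succ, add_one_mul, sub_eq_add_neg _ (h • _), ← smul_neg]
    exact norm_eulerStep_sub_le (F := fun z => -∇ f z) hLpos.le hlip hh.le
      (fun s _ => hflow s) (fun s hs => by simpa using hℓ s (hj.trans hs.1))
  intro k
  rw [← dist_eq_norm]
  exact dist_le_of_contraction_of_pseudoOrbit (y := fun j : ℕ => y (j * h)) (by linarith)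
    hcontract hperturb (by nlinarith) hgd hpseudo (by simpa [hx0] using hε0) k
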